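/- arXiv:2504.04312 — 5 statements merged into one kernel-verified Lean document; each statement's English description precedes it below -/
import Mathlib

section
/- The PPTA function μ is continuously differentiable (of class C¹) and bounded on the interval [0, ∞). -/
/-!
`μ` is glued from three smooth pieces: the pole `T / (T - t)`, a quarter sine wave, and a
constant. At `T*` the first two pieces both have value `T / (T - T*)` and slope
`T / (T - T*) ^ 2`; at `T` the sine piece reaches its maximum, so its slope `0` matches the
constant. Hence `μ` is `C¹` on all of `ℝ`. On `[0, ∞)` it is bounded, being continuous on the
compact interval `[0, T]` and constant afterwards.
-/

open Real Set Filter Topology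

/-- The saturated prescribed-time adjustment (PPTA) function `μ` with
parameters `T` and `Ts` (denoted `T*` in the paper). -/
noncomputable def mu (T Ts : ℝ) (t : ℝ) : ℝ :=
  if t ≤ Ts then T / (T - t)
  else if t < T then
    (T / (T - Ts)) * (1 + (2 / Real.pi) * Real.sin ((Real.pi / 2) * ((t - Ts) / (T - Ts))))
  else ((Real.pi + 2) / Real.pi) * (T / (T - Ts))

section Gluing

variable {F : Type*} [NormedAddCommGroup F] [NormedSpace ℝ F] {g h : ℝ → F} {a : ℝ}

theorem hasDerivAt_ite_le {d : F} (hg : HasDerivAt g d a) (hh : HasDerivAt h d a)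
    (hgh : g a = h a) : HasDerivAt (fun t => if t ≤ a then g t else h t) d a := by
  have hleft : HasDerivWithinAt (fun t => if t ≤ a then g t else h t) d (Iic a) a :=
    hg.hasDerivWithinAt.congr (fun t ht => if_pos ht) (if_pos le_rfl)
  have hright : HasDerivWithinAt (fun t => if t ≤ a then g t else h t) d (Ici a) a := by
    refine hh.hasDerivWithinAt.congr (fun t ht => ?_) (by simp [hgh])
    rcases (mem_Ici.mp ht).eq_or_lt with rfl | ht
    · simp [hgh]
    · exact if_neg ht.not_ge
  simpa [Iic_union_Ici] using hleft.union hright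

theorem contDiff_one_ite_le {U V : Set ℝ} (hU : IsOpen U) (hV : IsOpen V) (haU : Iic a ⊆ U)
    (haV : Ici a ⊆ V) (hg : ContDiffOn ℝ 1 g U) (hh : ContDiffOn ℝ 1 h V) (hgh : g a = h a)
    (hd : deriv g a = deriv h a) : ContDiff ℝ 1 (fun t => if t ≤ a then g t else h t) := by
  have hg' t (ht : t ∈ U) : HasDerivAt g (deriv g t) t :=
    ((hg.differentiableOn one_ne_zero t ht).differentiableAt (hU.mem_nhds ht)).hasDerivAt
  have hh' t (ht : t ∈ V) : HasDerivAt h (deriv h t) t :=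
    ((hh.differentiableOn one_ne_zero t ht).differentiableAt (hV.mem_nhds ht)).hasDerivAt
  have hderiv t : HasDerivAt (fun t => if t ≤ a then g t else h t)
      (if t ≤ a then deriv g t else deriv h t) t := by
    rcases lt_trichotomy t a with ht | rfl | ht
    · rw [if_pos ht.le]
      refine (hg' t (haU ht.le)).congr_of_eventuallyEq ?_
      filter_upwards [Iio_mem_nhds ht] with s hs using if_pos hs.le
    · rw [if_pos le_rfl]
      exact hasDerivAt_ite_le (hg' t (haU self_mem_Iic)) (hd ▸ hh' t (haV self_mem_Ici)) hgh
    · rw [if_neg ht.not_ge]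
      refine (hh' t (haV ht.le)).congr_of_eventuallyEq ?_
      filter_upwards [Ioi_mem_nhds ht] with s hs using if_neg hs.not_ge
  rw [contDiff_one_iff_deriv]
  refine ⟨fun t => (hderiv t).differentiableAt, ?_⟩
  rw [show deriv _ = _ from funext fun t => (hderiv t).deriv]
  exact continuous_if_le continuous_id continuous_const
    ((hg.continuousOn_deriv_of_isOpen hU le_rfl).mono haU)
    ((hh.continuousOn_deriv_of_isOpen hV le_rfl).mono haV) fun t ht => ht ▸ hd

end Gluing

section PPTA

variable {T Ts : ℝ}

noncomputable def muTransition (T Ts t : ℝ) : ℝ :=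
  T / (T - Ts) * (1 + 2 / π * sin (π / 2 * ((t - Ts) / (T - Ts))))

noncomputable def muTail (T Ts t : ℝ) : ℝ :=
  if t ≤ T then muTransition T Ts t else (π + 2) / π * (T / (T - Ts))

theorem hasDerivAt_muTransition (hT : Ts ≠ T) (t : ℝ) :
    HasDerivAt (muTransition T Ts)
      (T / (T - Ts) ^ 2 * cos (π / 2 * ((t - Ts) / (T - Ts)))) t := by
  have hphase : HasDerivAt (fun t => π / 2 * ((t - Ts) / (T - Ts))) (π / 2 * (1 / (T - Ts))) t :=
    (((hasDerivAt_id t).sub_const Ts).div_const (T - Ts)).const_mul (π / 2)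
  refine ((hphase.sin.const_mul (2 / π)).const_add 1).const_mul (T / (T - Ts)) |>.congr_deriv ?_
  field_simp [sub_ne_zero.2 hT.symm, pi_ne_zero]

theorem muTransition_self_left : muTransition T Ts Ts = T / (T - Ts) := by
  simp [muTransition]

theorem muTransition_self_right (hT : Ts ≠ T) :
    muTransition T Ts T = (π + 2) / π * (T / (T - Ts)) := by
  rw [muTransition, div_self (sub_ne_zero.2 hT.symm), mul_one, sin_pi_div_two]
  field_simp [pi_ne_zero]

theorem contDiff_muTail (hT : Ts < T) : ContDiff ℝ 1 (muTail T Ts) := by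
  refine contDiff_one_ite_le isOpen_univ isOpen_univ (subset_univ _) (subset_univ _)
    (by unfold muTransition; fun_prop) contDiffOn_const (muTransition_self_right hT.ne) ?_
  simp [(hasDerivAt_muTransition hT.ne T).deriv, div_self (sub_ne_zero.2 hT.ne')]

theorem mu_eq_ite (hT : Ts < T) :
    mu T Ts = fun t => if t ≤ Ts then T / (T - t) else muTail T Ts t := by
  ext t
  rcases eq_or_ne t T with rfl | htT
  · simp [mu, muTail, hT.not_ge, muTransition_self_right hT.ne]
  · simp only [mu, muTail, muTransition, le_iff_lt_or_eq.trans (or_iff_left htT)]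

theorem mu_of_le (hT : Ts < T) {t : ℝ} (ht : T ≤ t) :
    mu T Ts t = (π + 2) / π * (T / (T - Ts)) := by
  rw [mu, if_neg (by linarith), if_neg ht.not_gt]

theorem contDiff_mu (hT : Ts < T) : ContDiff ℝ 1 (mu T Ts) := by
  have hpole : HasDerivAt (fun t => T / (T - t)) (T / (T - Ts) ^ 2) Ts := by
    refine ((hasDerivAt_const Ts T).div ((hasDerivAt_id Ts).const_sub T)
      (sub_ne_zero.2 hT.ne')).congr_deriv ?_
    simp
  have htail : muTail T Ts =ᶠ[𝓝 Ts] muTransition T Ts := by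
    filter_upwards [Iio_mem_nhds hT] with t ht using if_pos ht.le
  rw [mu_eq_ite hT]
  refine contDiff_one_ite_le isOpen_Iio isOpen_univ (Iic_subset_Iio.2 hT) (subset_univ _)
    (contDiffOn_const.div (contDiffOn_const.sub contDiffOn_id)
      fun t ht => sub_ne_zero.2 (ne_of_gt ht))
    (contDiff_muTail hT).contDiffOn (by simp [muTail, hT.le, muTransition_self_left]) ?_
  simp [hpole.deriv, htail.deriv_eq, (hasDerivAt_muTransition hT.ne Ts).deriv]

end PPTA

theorem mu_contDiffOn_and_bounded_general (T Ts : ℝ) (hT : Ts < T) :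
    ContDiffOn ℝ 1 (mu T Ts) (Set.Ici 0) ∧
      ∃ M : ℝ, ∀ t ∈ Set.Ici (0 : ℝ), |mu T Ts t| ≤ M := by
  have hC1 := contDiff_mu hT
  refine ⟨hC1.contDiffOn, ?_⟩
  obtain ⟨C, hC⟩ :=
    isCompact_Icc.exists_bound_of_continuousOn (hC1.continuous.continuousOn (s := Icc 0 T))
  refine ⟨max C |(π + 2) / π * (T / (T - Ts))|, fun t ht => ?_⟩
  rcases le_total t T with htT | hTt
  · exact (hC t ⟨ht, htT⟩).trans (le_max_left _ _)
  · rw [mu_of_le hT hTt]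
    exact le_max_right _ _

/-- the PPTA function `μ` is `C¹` and bounded on `[0, ∞)`. -/
theorem mu_contDiffOn_and_bounded (T Ts : ℝ) (hTs : 0 < Ts) (hT : Ts < T) :
    ContDiffOn ℝ 1 (mu T Ts) (Set.Ici 0) ∧
      ∃ M : ℝ, ∀ t ∈ Set.Ici (0 : ℝ), |mu T Ts t| ≤ M :=
  mu_contDiffOn_and_bounded_general T Ts hT
end

section
/- If V : [0, T*] → ℝ is differentiable and nonnegative and satisfies the differential inequality V′(t) ≤ −α·(T/(T − t))·V(t) + β for all t ∈ [0, T*], where α > 1/T and β ≥ 0, then V(T*) ≤ ((T − T*)/T)^{αT}·V(0) + (βT/(αT − 1))·[ (T − T*)/T − ((T − T*)/T)^{αT} ]. -/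
/-!
With `c = αT` and `r(t) = (T - t)/T`, the integrating factor `E = r^(-c)` satisfies
`E' = α (T/(T - t)) E`, and `W = k r` with `k = βT/(c - 1)` solves `W' = -α (T/(T - t)) W + β`.
So `E (V - W)` has nonpositive derivative on `[0, T*]`, whence `E(T*) (V(T*) - W(T*)) ≤ V(0) - k`,
which rearranges to the bound.
-/

open Set

theorem antitoneOn_mul_of_hasDerivWithinAt_le_neg_mul {s : Set ℝ} (hs : Convex ℝ s)
    {U U' E p : ℝ → ℝ} (hU : ∀ t ∈ s, HasDerivWithinAt U (U' t) s t)
    (hE : ∀ t ∈ s, HasDerivWithinAt E (p t * E t) s t) (hE₀ : ∀ t ∈ s, 0 ≤ E t)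
    (hUE : ∀ t ∈ s, U' t ≤ -p t * U t) :
    AntitoneOn (fun t => E t * U t) s := by
  have hEU : ∀ t ∈ s, HasDerivWithinAt (fun t => E t * U t)
      (p t * E t * U t + E t * U' t) s t := fun t ht => (hE t ht).mul (hU t ht)
  refine antitoneOn_of_hasDerivWithinAt_nonpos hs (fun t ht => (hEU t ht).continuousWithinAt)
    (fun t ht => (hEU t (interior_subset ht)).mono interior_subset) fun t ht => ?_
  have ht := interior_subset ht
  have : E t * U' t ≤ E t * (-p t * U t) := mul_le_mul_of_nonneg_left (hUE t ht) (hE₀ t ht)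
  linarith

theorem hasDerivAt_sub_div_rpow_neg {T t : ℝ} (hT : 0 < T) (ht : t < T) (α : ℝ) :
    HasDerivAt (fun s => ((T - s) / T) ^ (-(α * T)))
      (α * (T / (T - t)) * ((T - t) / T) ^ (-(α * T))) t := by
  have hr : HasDerivAt (fun s => (T - s) / T) (-1 / T) t := by
    simpa using ((hasDerivAt_id t).const_sub T).div_const T
  have hpos : 0 < (T - t) / T := div_pos (by linarith) hT
  convert hr.rpow_const (p := -(α * T)) (Or.inl hpos.ne') using 1
  rw [Real.rpow_sub hpos, Real.rpow_one]
  field_simp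

theorem antitoneOn_sub_div_rpow_neg_mul_sub {T α β k : ℝ} (hT : 0 < T)
    (hk : k * (α * T - 1) = β * T) {s : Set ℝ} (hs : Convex ℝ s) (hsT : ∀ t ∈ s, t < T)
    {V V' : ℝ → ℝ} (hV : ∀ t ∈ s, HasDerivWithinAt V (V' t) s t)
    (hineq : ∀ t ∈ s, V' t ≤ -α * (T / (T - t)) * V t + β) :
    AntitoneOn (fun t => ((T - t) / T) ^ (-(α * T)) * (V t - k * ((T - t) / T))) s := by
  refine antitoneOn_mul_of_hasDerivWithinAt_le_neg_mul hs (U' := fun t => V' t + k / T)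
    (p := fun t => α * (T / (T - t))) (fun t ht => ?_)
    (fun t ht => (hasDerivAt_sub_div_rpow_neg hT (hsT t ht) α).hasDerivWithinAt)
    (fun t ht => (Real.rpow_pos_of_pos (div_pos (sub_pos.2 (hsT t ht)) hT) _).le)
    (fun t ht => ?_)
  · have hW : HasDerivAt (fun s => k * ((T - s) / T)) (-(k / T)) t :=
      ((((hasDerivAt_id' t).const_sub T).div_const T).const_mul k).congr_deriv (by ring)
    exact ((hV t ht).sub hW.hasDerivWithinAt).congr_deriv (sub_neg_eq_add _ _)
  · have hTt : T - t ≠ 0 := (sub_pos.2 (hsT t ht)).ne'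
    have : k / T = -α * (T / (T - t)) * (-(k * ((T - t) / T))) - β := by
      field_simp
      linear_combination -hk
    linarith [hineq t ht]

theorem prescribed_time_gronwall_bound_general
    (T Ts α β : ℝ) (hTs : 0 < Ts) (hT : Ts < T) (hα : 1 / T < α)
    (V V' : ℝ → ℝ)
    (hV : ∀ t ∈ Set.Icc (0 : ℝ) Ts, HasDerivWithinAt V (V' t) (Set.Icc 0 Ts) t)
    (hineq : ∀ t ∈ Set.Icc (0 : ℝ) Ts, V' t ≤ -α * (T / (T - t)) * V t + β) :
    V Ts ≤ ((T - Ts) / T) ^ (α * T) * V 0 +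
      (β * T / (α * T - 1)) * ((T - Ts) / T - ((T - Ts) / T) ^ (α * T)) := by
  have hT₀ : 0 < T := hTs.trans hT
  have hαT : α * T - 1 ≠ 0 := by rw [div_lt_iff₀ hT₀] at hα; linarith
  set k := β * T / (α * T - 1)
  have hk : k * (α * T - 1) = β * T := div_mul_cancel₀ _ hαT
  clear_value k
  have hanti := antitoneOn_sub_div_rpow_neg_mul_sub hT₀ hk (convex_Icc 0 Ts)
    (fun t ht => ht.2.trans_lt hT) hV hineq
  have hGle : ((T - Ts) / T) ^ (-(α * T)) * (V Ts - k * ((T - Ts) / T)) ≤ V 0 - k := by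
    simpa [hT₀.ne'] using hanti (left_mem_Icc.2 hTs.le) (right_mem_Icc.2 hTs.le) hTs.le
  have hrs : 0 < (T - Ts) / T := div_pos (sub_pos.2 hT) hT₀
  rw [Real.rpow_neg hrs.le, inv_mul_le_iff₀ (Real.rpow_pos_of_pos hrs _)] at hGle
  linarith

/-- Grönwall-type bound on `[0, T*]` for the differential inequality
`V′(t) ≤ −α·(T/(T − t))·V(t) + β` with `α > 1/T` and `β ≥ 0`. -/
theorem prescribed_time_gronwall_bound
    (T Ts α β : ℝ) (hTs : 0 < Ts) (hT : Ts < T) (hα : 1 / T < α) (hβ : 0 ≤ β)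
    (V V' : ℝ → ℝ)
    (hV : ∀ t ∈ Set.Icc (0 : ℝ) Ts, HasDerivWithinAt V (V' t) (Set.Icc 0 Ts) t)
    (hVnonneg : ∀ t ∈ Set.Icc (0 : ℝ) Ts, 0 ≤ V t)
    (hineq : ∀ t ∈ Set.Icc (0 : ℝ) Ts, V' t ≤ -α * (T / (T - t)) * V t + β) :
    V Ts ≤ ((T - Ts) / T) ^ (α * T) * V 0 +
      (β * T / (α * T - 1)) * ((T - Ts) / T - ((T - Ts) / T) ^ (α * T)) :=
  prescribed_time_gronwall_bound_general T Ts α β hTs hT hα V V' hV hineq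
end

section
/- Let f : ℝⁿ → ℝⁿ and suppose y : [0, T) → ℝⁿ is differentiable and satisfies y′(t) = μ_p(t)·f(y(t)) for all t ∈ [0, T), where μ_p(t) = T/(T − t). Then the time-rescaled trajectory ȳ : [0, ∞) → ℝⁿ defined by ȳ(s) = y(η(s)), with η(s) = T·(1 − e^{−s/T}), satisfies ȳ(0) = y(0) and ȳ′(s) = f(ȳ(s)) for all s ≥ 0; i.e., the prescribed-time-scaled flow on the finite interval [0, T) coincides, after the time scale transformation, with the unscaled flow on the infinite interval [0, ∞). -/
/-- The time scale transformation function `η(s) = T·(1 − e^{−s/T})`. -/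
noncomputable def eta (T : ℝ) (s : ℝ) : ℝ := T * (1 - Real.exp (-s / T))

theorem HasDerivAt.comp_of_deriv_mul_eq_one {E : Type*} [NormedAddCommGroup E] [NormedSpace ℝ E]
    {y : ℝ → E} {η : ℝ → ℝ} {μ η' s : ℝ} {v : E}
    (hy : HasDerivAt y (μ • v) (η s)) (hη : HasDerivAt η η' s) (h : η' * μ = 1) :
    HasDerivAt (y ∘ η) v s := by
  simpa [smul_smul, h] using hy.scomp s hη

theorem eta_zero (T : ℝ) : eta T 0 = 0 := by
  simp [eta]

theorem sub_eta (T s : ℝ) : T - eta T s = T * Real.exp (-s / T) := by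
  unfold eta; ring

theorem hasDerivAt_eta {T : ℝ} (hT : T ≠ 0) (s : ℝ) : HasDerivAt (eta T) (Real.exp (-s / T)) s := by
  have hexp : HasDerivAt (fun s => Real.exp (-s / T)) (Real.exp (-s / T) * (-1 / T)) s :=
    (Real.hasDerivAt_exp _).comp s (by simpa using (hasDerivAt_id s).neg.div_const T)
  have h : HasDerivAt (fun s => T * (1 - Real.exp (-s / T)))
      (T * (0 - Real.exp (-s / T) * (-1 / T))) s :=
    ((hasDerivAt_const s 1).sub hexp).const_mul T
  refine h.congr_deriv ?_
  field_simp
  ring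

theorem eta_mem_Ico {T s : ℝ} (hT : 0 < T) (hs : 0 ≤ s) : eta T s ∈ Set.Ico 0 T := by
  have hexp_le : Real.exp (-s / T) ≤ 1 :=
    Real.exp_le_one_iff.mpr (by rw [neg_div]; exact neg_nonpos.mpr (div_nonneg hs hT.le))
  have hgap : 0 < T - eta T s := by rw [sub_eta]; positivity
  exact ⟨mul_nonneg hT.le (by linarith), by linarith⟩

-- `η' · (μ_p ∘ η) = 1`: the clock `η` exactly cancels the prescribed-time gain `μ_p`.
theorem exp_mul_div_sub_eta {T : ℝ} (hT : T ≠ 0) (s : ℝ) :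
    Real.exp (-s / T) * (T / (T - eta T s)) = 1 := by
  rw [sub_eta]
  field_simp

/-- if `y : [0, T) → ℝⁿ` satisfies `y′(t) = μ_p(t)·f(y(t))` with
`μ_p(t) = T/(T − t)`, then the time-rescaled trajectory `ȳ = y ∘ η` satisfies
`ȳ(0) = y(0)` and `ȳ′(s) = f(ȳ(s))` for all `s ≥ 0`. -/
theorem time_scale_transformation_of_flow
    (T : ℝ) (hT : 0 < T) (n : ℕ)
    (f : (Fin n → ℝ) → (Fin n → ℝ)) (y : ℝ → (Fin n → ℝ))
    (hy : ∀ t ∈ Set.Ico (0 : ℝ) T, HasDerivAt y ((T / (T - t)) • f (y t)) t) :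
    (y ∘ eta T) 0 = y 0 ∧
      ∀ s ≥ (0 : ℝ), HasDerivAt (y ∘ eta T) (f ((y ∘ eta T) s)) s := by
  refine ⟨by rw [Function.comp_apply, eta_zero], fun s hs => ?_⟩
  exact (hy _ (eta_mem_Ico hT hs)).comp_of_deriv_mul_eq_one (hasDerivAt_eta hT.ne' s)
    (exp_mul_div_sub_eta hT.ne' s)
end

section
/- Let c₁ > 0, d_m ≥ 0, let μ : [0, ∞) → ℝ be continuous with μ(t) ≥ 1 for all t, and let g : [0, ∞) → ℝ³ be continuous with ‖g(t)‖ ≤ d_m for all t. If e : [0, ∞) → ℝ³ is differentiable and satisfies the observation error dynamics e′(t) = g(t) − c₁·μ(t)·e(t), then ‖e(t)‖ ≤ max{ d_m/c₁, ‖e(0)‖ } for all t ≥ 0; i.e., the ball of radius d_m/c₁ is attractive and forward invariant for the estimation error. -/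
/-! The squared norm of the error decreases strictly whenever the error lies on a sphere of
radius `R > max (dm / c₁) ‖e 0‖`, because there the damping `c₁ μ R² ≥ c₁ R²` beats the
forcing `R dm`. By the fencing theorem for right derivatives the error never leaves such a
ball, and letting `R` decrease to the maximum gives the bound. -/

open Set

open scoped RealInnerProductSpace

variable {E : Type*} [NormedAddCommGroup E] [InnerProductSpace ℝ E]

theorem norm_le_of_inner_deriv_neg_of_norm_eq {e e' : ℝ → E} {a b R : ℝ}
    (hcont : ContinuousOn e (Icc a b))
    (hderiv : ∀ x ∈ Ico a b, HasDerivWithinAt e (e' x) (Ici x) x) (ha : ‖e a‖ ≤ R)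
    (hbound : ∀ x ∈ Ico a b, ‖e x‖ = R → ⟪e x, e' x⟫ < 0) :
    ∀ x ∈ Icc a b, ‖e x‖ ≤ R := by
  have hR : 0 ≤ R := (norm_nonneg _).trans ha
  have hsq : ∀ x, ‖e x‖ ^ 2 ≤ R ^ 2 ↔ ‖e x‖ ≤ R := fun x =>
    pow_le_pow_iff_left₀ (norm_nonneg _) hR two_ne_zero
  intro x hx
  refine (hsq x).1 <| image_le_of_deriv_right_lt_deriv_boundary (f := (‖e ·‖ ^ 2))
    (B := fun _ => R ^ 2) (B' := fun _ => 0) (hcont.norm.pow 2)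
    (fun y hy => (hderiv y hy).norm_sq) ((hsq a).2 ha) (fun _ => hasDerivAt_const _ _)
    (fun y hy hyR => ?_) hx
  have hyR : ‖e y‖ = R := by simpa [pow_left_inj₀ (norm_nonneg _) hR two_ne_zero] using hyR
  linarith [hbound y hy hyR]

theorem inner_sub_smul_neg {v w : E} {c m d : ℝ} (hc : 0 < c) (hm : 1 ≤ m) (hw : ‖w‖ ≤ d)
    (hv : d < c * ‖v‖) : ⟪v, w - (c * m) • v⟫ < 0 := by
  have hv0 : 0 < ‖v‖ := pos_of_mul_pos_right ((norm_nonneg w).trans_lt (hw.trans_lt hv)) hc.le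
  calc ⟪v, w - (c * m) • v⟫ = ⟪v, w⟫ - c * m * ‖v‖ ^ 2 := by
        rw [inner_sub_right, real_inner_smul_right, real_inner_self_eq_norm_sq]
    _ ≤ ‖v‖ * d - c * 1 * ‖v‖ ^ 2 := by
        gcongr
        exact (real_inner_le_norm v w).trans (mul_le_mul_of_nonneg_left hw hv0.le)
    _ = ‖v‖ * (d - c * ‖v‖) := by ring
    _ < 0 := mul_neg_of_pos_of_neg hv0 (by linarith)

theorem observer_error_ultimate_bound_general
    (c₁ dm : ℝ) (hc₁ : 0 < c₁)
    (μ : ℝ → ℝ)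
    (hμ : ∀ t ∈ Set.Ici (0 : ℝ), 1 ≤ μ t)
    (g : ℝ → EuclideanSpace ℝ (Fin 3))
    (hg : ∀ t ∈ Set.Ici (0 : ℝ), ‖g t‖ ≤ dm)
    (e : ℝ → EuclideanSpace ℝ (Fin 3))
    (he : ∀ t ∈ Set.Ici (0 : ℝ),
      HasDerivWithinAt e (g t - (c₁ * μ t) • e t) (Set.Ici 0) t) :
    ∀ t ∈ Set.Ici (0 : ℝ), ‖e t‖ ≤ max (dm / c₁) ‖e 0‖ := by
  intro t ht
  refine le_of_forall_gt_imp_ge_of_dense fun R hR => ?_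
  rw [max_lt_iff, div_lt_iff₀' hc₁] at hR
  refine norm_le_of_inner_deriv_neg_of_norm_eq (a := 0) (b := t)
    (fun x hx => (he x hx.1).continuousWithinAt.mono Icc_subset_Ici_self)
    (fun x hx => (he x hx.1).mono (Ici_subset_Ici.2 hx.1)) hR.2.le
    (fun x hx hxR => ?_) t ⟨ht, le_rfl⟩
  exact inner_sub_smul_neg hc₁ (hμ x hx.1) (hg x hx.1) (hxR ▸ hR.1)

/-- for the observation-error dynamics `e′ = g − c₁ μ e`, with
`μ ≥ 1` and `‖g‖ ≤ d_m`, the ball of radius `d_m/c₁` is attractive and forward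
invariant: `‖e(t)‖ ≤ max{d_m/c₁, ‖e(0)‖}` for all `t ≥ 0`. -/
theorem observer_error_ultimate_bound
    (c₁ dm : ℝ) (hc₁ : 0 < c₁) (hdm : 0 ≤ dm)
    (μ : ℝ → ℝ) (hμcont : ContinuousOn μ (Set.Ici 0))
    (hμ : ∀ t ∈ Set.Ici (0 : ℝ), 1 ≤ μ t)
    (g : ℝ → EuclideanSpace ℝ (Fin 3)) (hgcont : ContinuousOn g (Set.Ici 0))
    (hg : ∀ t ∈ Set.Ici (0 : ℝ), ‖g t‖ ≤ dm)
    (e : ℝ → EuclideanSpace ℝ (Fin 3))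
    (he : ∀ t ∈ Set.Ici (0 : ℝ),
      HasDerivWithinAt e (g t - (c₁ * μ t) • e t) (Set.Ici 0) t) :
    ∀ t ∈ Set.Ici (0 : ℝ), ‖e t‖ ≤ max (dm / c₁) ‖e 0‖ :=
  observer_error_ultimate_bound_general c₁ dm hc₁ μ hμ g hg e he
end

section
/- Let J be a constant real 3×3 matrix, c₁ > 0, and let μ : ℝ → ℝ and ω_e, u, H, d, p : ℝ → ℝ³ be differentiable functions satisfying the error dynamics J·ω_e′(t) = H(t) + u(t) + d(t) and the observer internal dynamics p′(t) = −c₁μ(t)·p(t) − c₁μ(t)·( c₁μ(t)·J·ω_e(t) + H(t) + u(t) ) − c₁μ′(t)·J·ω_e(t). Define the disturbance estimate d̂(t) = p(t) + c₁μ(t)·J·ω_e(t) and the estimation error d̃(t) = d(t) − d̂(t). Then d̃ satisfies d̃′(t) = d′(t) − c₁μ(t)·d̃(t) for all t. -/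
theorem HasDerivAt.matrix_mulVec {m n : Type*} [Fintype m] [Fintype n]
    (A : Matrix m n ℝ) {f : ℝ → n → ℝ} {f' : n → ℝ} {t : ℝ} (hf : HasDerivAt f f' t) :
    HasDerivAt (fun s => A.mulVec (f s)) (A.mulVec f') t :=
  (Matrix.mulVecLin A).toContinuousLinearMap.hasFDerivAt.comp_hasDerivAt t hf

/-- The observer `d̂ = p + k • x` for `x' = v + d`: the feedback terms in `p'` cancel every
contribution to `d̂'` except `k • d - k • d̂`. -/
theorem HasDerivAt.sub_observer_estimate {F : Type*} [NormedAddCommGroup F] [NormedSpace ℝ F]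
    {k : ℝ → ℝ} {x d p : ℝ → F} {k' : ℝ} {v d' : F} {t : ℝ}
    (hk : HasDerivAt k k' t) (hx : HasDerivAt x (v + d t) t) (hd : HasDerivAt d d' t)
    (hp : HasDerivAt p (-k t • p t - k t • (k t • x t + v) - k' • x t) t) :
    HasDerivAt (fun s => d s - (p s + k s • x s)) (d' - k t • (d t - (p t + k t • x t))) t := by
  refine (hd.sub (hp.add (hk.smul hx))).congr_deriv ?_
  simp only [smul_add, smul_sub, smul_smul, neg_smul]
  abel

theorem ptdo_estimation_error_dynamics_general
    (J : Matrix (Fin 3) (Fin 3) ℝ) (c₁ : ℝ)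
    (μ μ' : ℝ → ℝ) (ωe ωe' u H d d' p : ℝ → Fin 3 → ℝ)
    (hμ : ∀ t, HasDerivAt μ (μ' t) t)
    (hωe : ∀ t, HasDerivAt ωe (ωe' t) t)
    (hdyn : ∀ t, J.mulVec (ωe' t) = H t + u t + d t)
    (hd : ∀ t, HasDerivAt d (d' t) t)
    (hp : ∀ t, HasDerivAt p
      (-(c₁ * μ t) • p t
        - (c₁ * μ t) • ((c₁ * μ t) • J.mulVec (ωe t) + H t + u t)
        - (c₁ * μ' t) • J.mulVec (ωe t)) t) :
    ∀ t, HasDerivAt (fun s => d s - (p s + (c₁ * μ s) • J.mulVec (ωe s)))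
      (d' t - (c₁ * μ t) • (d t - (p t + (c₁ * μ t) • J.mulVec (ωe t)))) t := by
  intro t
  have hJωe : HasDerivAt (fun s => J.mulVec (ωe s)) (H t + u t + d t) t :=
    hdyn t ▸ HasDerivAt.matrix_mulVec J (hωe t)
  refine ((hμ t).const_mul c₁).sub_observer_estimate hJωe (hd t) ?_
  simpa only [add_assoc] using hp t

/-- the estimation error `d̃ = d − d̂` of the prescribed-time
disturbance observer, where `d̂ = p + c₁ μ J ω_e`, satisfies the error dynamics
`d̃′ = d′ − c₁ μ d̃`, given the system dynamics `J ω_e′ = H + u + d` and the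
observer internal dynamics for `p`. -/
theorem ptdo_estimation_error_dynamics
    (J : Matrix (Fin 3) (Fin 3) ℝ) (c₁ : ℝ) (hc₁ : 0 < c₁)
    (μ μ' : ℝ → ℝ) (ωe ωe' u H d d' p : ℝ → Fin 3 → ℝ)
    (hμ : ∀ t, HasDerivAt μ (μ' t) t)
    (hωe : ∀ t, HasDerivAt ωe (ωe' t) t)
    (hdyn : ∀ t, J.mulVec (ωe' t) = H t + u t + d t)
    (hd : ∀ t, HasDerivAt d (d' t) t)
    (hp : ∀ t, HasDerivAt p
      (-(c₁ * μ t) • p t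
        - (c₁ * μ t) • ((c₁ * μ t) • J.mulVec (ωe t) + H t + u t)
        - (c₁ * μ' t) • J.mulVec (ωe t)) t) :
    ∀ t, HasDerivAt (fun s => d s - (p s + (c₁ * μ s) • J.mulVec (ωe s)))
      (d' t - (c₁ * μ t) • (d t - (p t + (c₁ * μ t) • J.mulVec (ωe t)))) t :=
  ptdo_estimation_error_dynamics_general J c₁ μ μ' ωe ωe' u H d d' p hμ hωe hdyn hd hp
end
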